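/- Let n and n_0 be integers with n ≥ n_0 ≥ 2. Then ϱ_n ≥ ϱ_{n_0} + Σ_{k=n_0}^{n−1} τ_k/k. In particular, the sequence (ϱ_n)_{n≥2} is monotone increasing. -/

import Mathlib

open scoped BigOperators

/-- The sets `ℒ_m` of the lucky-number sieve. `luckySet 0` is a junk value. -/
noncomputable def luckySet : ℕ → Set ℕ
  | 0 => Set.univ
  | 1 => {k | 1 ≤ k}
  | 2 => {2} ∪ {k | 3 ≤ k ∧ Odd k}
  | m + 3 =>
      {x | ∃ n : ℕ, 1 ≤ n ∧ ¬ (Nat.nth (· ∈ luckySet (m + 2)) (m + 1) ∣ n) ∧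
        x = Nat.nth (· ∈ luckySet (m + 2)) (n - 1)}

/-- `ℓ_{m,n}`: the `n`-th element (1-indexed) of `ℒ_m` in increasing order. -/
noncomputable def luckyEll (m n : ℕ) : ℕ := Nat.nth (· ∈ luckySet m) (n - 1)

/-- The `n`-th lucky number: `ℓ_1 = 2` and `ℓ_n = ℓ_{n,n}` for `n ≥ 2`. -/
noncomputable def lucky : ℕ → ℕ
  | 1 => 2
  | n => luckyEll n n

/-- `L_n(x) = #(ℒ_n ∩ [1, x])`. -/
noncomputable def luckyCount (n : ℕ) (x : ℝ) : ℕ :=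
  {k : ℕ | k ∈ luckySet n ∧ 1 ≤ k ∧ (k : ℝ) ≤ x}.ncard

/-- `ρ_m = ∏_{i=1}^{m-1} (1 - 1/ℓ_i)⁻¹`. -/
noncomputable def luckyRho (m : ℕ) : ℝ :=
  ∏ i ∈ Finset.Icc 1 (m - 1), ((1 : ℝ) - 1 / (lucky i : ℝ))⁻¹

/-- `τ_{m,n} = (1/n) ∑_{i=1}^{m-1} (ρ_{i+1}/ρ_m) {L_i(ℓ_{m,n})/ℓ_i}`. -/
noncomputable def luckyTau2 (m n : ℕ) : ℝ :=
  (1 / (n : ℝ)) * ∑ i ∈ Finset.Icc 1 (m - 1),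
    (luckyRho (i + 1) / luckyRho m) *
      Int.fract ((luckyCount i (luckyEll m n : ℝ) : ℝ) / (lucky i : ℝ))

/-- `τ_m = τ_{m,m}`. -/
noncomputable def luckyTau (m : ℕ) : ℝ := luckyTau2 m m

/-- `ϱ_m = ρ_m - 1 - ∑_{k=1}^{m-1} 1/k`. -/
noncomputable def luckyVarrho (m : ℕ) : ℝ :=
  luckyRho m - 1 - ∑ k ∈ Finset.Icc 1 (m - 1), (1 : ℝ) / (k : ℝ)

/-- `ξ_{x,y} = ∑_{x < i < y} 1/ℓ_i`. -/
noncomputable def luckyXi (x y : ℝ) : ℝ :=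
  ∑ i ∈ Finset.Ioo ⌊x⌋₊ ⌈y⌉₊, 1 / (lucky i : ℝ)


section
open Classical

lemma lucky_two_add (n : ℕ) : lucky (n + 2) = luckyEll (n + 2) (n + 2) := rfl

lemma luckySet_two_infinite : (luckySet 2).Infinite := by
  apply Set.infinite_of_injective_forall_mem (f := fun n : ℕ => 2 * n + 3)
  · intro a b h
    simp only [] at h
    omega
  · intro n
    show 2 * n + 3 ∈ ({2} : Set ℕ) ∪ {k | 3 ≤ k ∧ Odd k}
    right
    exact ⟨by omega, ⟨n + 1, by ring⟩⟩

lemma luckySet_two_ge {k : ℕ} (h : k ∈ luckySet 2) : 2 ≤ k := by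
  rcases h with h | h
  · simp_all
  · exact h.1.trans' (by omega)

lemma luckySet_aux : ∀ m, 2 ≤ m → (luckySet m).Infinite ∧ ∀ k ∈ luckySet m, 2 ≤ k := by
  intro m
  induction m using Nat.strong_induction_on with
  | _ m ih =>
    intro hm
    match m, hm with
    | 2, _ => exact ⟨luckySet_two_infinite, fun k hk => luckySet_two_ge hk⟩
    | (j+3), _ =>
      obtain ⟨hinf, hge⟩ := ih (j + 2) (by omega) (by omega)
      have hℓ : 2 ≤ Nat.nth (· ∈ luckySet (j + 2)) (j + 1) :=
        hge _ (Nat.nth_mem_of_infinite hinf _)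
      constructor
      · apply Set.infinite_of_injective_forall_mem
          (f := fun k : ℕ => Nat.nth (· ∈ luckySet (j + 2)) ((Nat.nth (· ∈ luckySet (j + 2)) (j + 1)) * k))
        · intro a b h
          have := (Nat.nth_injective hinf) h
          have h2 : 0 < Nat.nth (· ∈ luckySet (j + 2)) (j + 1) := by omega
          exact Nat.eq_of_mul_eq_mul_left h2 this
        · intro k
          refine ⟨Nat.nth (· ∈ luckySet (j + 2)) (j + 1) * k + 1, le_add_self, ?_, by simp⟩
          intro hdvd
          have : Nat.nth (· ∈ luckySet (j + 2)) (j + 1) ∣ 1 :=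
            (Nat.dvd_add_right (Dvd.intro k rfl)).mp hdvd
          have := Nat.le_of_dvd one_pos this
          omega
      · rintro x ⟨n, -, -, rfl⟩
        exact hge _ (Nat.nth_mem_of_infinite hinf _)

lemma luckySet_infinite {m : ℕ} (hm : 2 ≤ m) : (luckySet m).Infinite := (luckySet_aux m hm).1

lemma luckySet_ge_two {m k : ℕ} (hm : 2 ≤ m) (hk : k ∈ luckySet m) : 2 ≤ k :=
  (luckySet_aux m hm).2 k hk

lemma luckySet_ge_one {m k : ℕ} (hm : 1 ≤ m) (hk : k ∈ luckySet m) : 1 ≤ k := by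
  rcases Nat.lt_or_ge m 2 with h | h
  · interval_cases m
    · exact hk
  · exact (luckySet_ge_two h hk).trans' (by omega)

lemma lucky_ge_two {m : ℕ} (hm : 1 ≤ m) : 2 ≤ lucky m := by
  rcases Nat.lt_or_ge m 2 with h | h
  · interval_cases m; rfl
  · obtain ⟨j, rfl⟩ : ∃ j, m = j + 2 := ⟨m - 2, by omega⟩
    rw [lucky_two_add]
    exact luckySet_ge_two h (Nat.nth_mem_of_infinite (luckySet_infinite h) _)

lemma mem_luckySet_succ {j x : ℕ} : x ∈ luckySet (j + 3) ↔
    ∃ n : ℕ, 1 ≤ n ∧ ¬ (Nat.nth (· ∈ luckySet (j + 2)) (j + 1) ∣ n) ∧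
      x = Nat.nth (· ∈ luckySet (j + 2)) (n - 1) := Iff.rfl

lemma luckyCount_natCast {m : ℕ} (hm : 1 ≤ m) (N : ℕ) :
    luckyCount m (N : ℝ) = Nat.count (· ∈ luckySet m) (N + 1) := by
  have hset : {k : ℕ | k ∈ luckySet m ∧ 1 ≤ k ∧ (k : ℝ) ≤ (N : ℝ)}
      = ↑((Finset.range (N + 1)).filter (· ∈ luckySet m)) := by
    ext k
    simp only [Set.mem_setOf_eq, Finset.coe_filter, Finset.mem_range, Nat.lt_succ_iff,
      Nat.cast_le]
    constructor
    · rintro ⟨h1, h2, h3⟩; exact ⟨h3, h1⟩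
    · rintro ⟨h1, h2⟩; exact ⟨h2, luckySet_ge_one hm h2, h1⟩
  rw [luckyCount, hset, Set.ncard_coe_finset, Nat.count_eq_card_filter_range]

lemma luckyCount_one (N : ℕ) : luckyCount 1 (N : ℝ) = N := by
  have hset : {k : ℕ | k ∈ luckySet 1 ∧ 1 ≤ k ∧ (k : ℝ) ≤ (N : ℝ)}
      = ↑(Finset.Icc 1 N) := by
    ext k
    simp only [Set.mem_setOf_eq, Finset.coe_Icc, Set.mem_Icc, Nat.cast_le]
    exact ⟨fun ⟨h1, h2, h3⟩ => ⟨h2, h3⟩, fun ⟨h1, h2⟩ => ⟨h1, h1, h2⟩⟩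
  rw [luckyCount, hset, Set.ncard_coe_finset, Nat.card_Icc]
  omega

lemma luckyCount_two {N : ℕ} (hN : 2 ≤ N) : luckyCount 2 (N : ℝ) = N - N / 2 := by
  classical
  have hset : {k : ℕ | k ∈ luckySet 2 ∧ 1 ≤ k ∧ (k : ℝ) ≤ (N : ℝ)}
      = ↑(insert 2 (((Finset.Ioc 0 N).filter (fun k => ¬ 2 ∣ k)).erase 1)) := by
    ext k
    simp only [Set.mem_setOf_eq, Finset.coe_insert, Set.mem_insert_iff, Finset.coe_erase,
      Set.mem_diff, Finset.coe_filter, Finset.mem_Ioc, Nat.cast_le, Set.mem_singleton_iff]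
    constructor
    · rintro ⟨h1, h2, h3⟩
      rcases h1 with h1 | ⟨h4, h5⟩
      · left; simpa using h1
      · right
        rw [Nat.odd_iff] at h5
        exact ⟨⟨⟨by omega, h3⟩, by omega⟩, by omega⟩
    · rintro (rfl | ⟨⟨⟨h1, h2⟩, h3⟩, h4⟩)
      · exact ⟨Or.inl rfl, by omega, hN⟩
      · rw [Nat.dvd_iff_mod_eq_zero] at h3
        refine ⟨Or.inr ⟨by omega, Nat.odd_iff.mpr (by omega)⟩, by omega, h2⟩
  rw [luckyCount, hset, Set.ncard_coe_finset]
  have h2mem : (2 : ℕ) ∉ ((Finset.Ioc 0 N).filter (fun k => ¬ 2 ∣ k)).erase 1 := by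
    simp
  rw [Finset.card_insert_of_notMem h2mem]
  have h1mem : (1 : ℕ) ∈ (Finset.Ioc 0 N).filter (fun k => ¬ 2 ∣ k) := by
    simp; omega
  rw [Finset.card_erase_of_mem h1mem]
  have hdvd : Finset.card ((Finset.Ioc 0 N).filter (fun k => 2 ∣ k)) = N / 2 :=
    Nat.Ioc_filter_dvd_card_eq_div N 2
  have hsplit := Finset.card_filter_add_card_filter_not
    (s := Finset.Ioc 0 N) (p := fun k => 2 ∣ k)
  have hIoc : Finset.card (Finset.Ioc 0 N) = N := by simp
  have hhalf : N / 2 < N := Nat.div_lt_self (by omega) (by norm_num)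
  omega

lemma luckyCount_step {i : ℕ} (hi : 2 ≤ i) (N : ℕ) :
    luckyCount (i + 1) (N : ℝ) = luckyCount i (N : ℝ) - luckyCount i (N : ℝ) / lucky i := by
  classical
  obtain ⟨j, rfl⟩ : ∃ j, i = j + 2 := ⟨i - 2, by omega⟩
  have hinf := luckySet_infinite (m := j + 2) (by omega)
  set p : ℕ → Prop := (· ∈ luckySet (j + 2)) with hp
  set ℓ : ℕ := Nat.nth p (j + 1) with hℓdef
  have hinf' : {x | p x}.Infinite := hinf
  have hℓ : 2 ≤ ℓ := luckySet_ge_two (by omega) (Nat.nth_mem_of_infinite hinf _)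
  have hlucky : lucky (j + 2) = ℓ := rfl
  set L : ℕ := luckyCount (j + 2) (N : ℝ) with hLdef
  have hLcount : L = Nat.count p (N + 1) := luckyCount_natCast (by omega) N
  have hmemle : ∀ n : ℕ, 1 ≤ n → (Nat.nth p (n - 1) ≤ N ↔ n ≤ L) := by
    intro n hn
    constructor
    · intro hle
      have h1 : Nat.nth p (n - 1) < N + 1 := by omega
      have h2 : n - 1 < Nat.count p (N + 1) := (Nat.lt_nth_iff_count_lt hinf').mpr h1
      omega
    · intro hle
      have h1 : n - 1 < Nat.count p (N + 1) := by omega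
      have h2 : Nat.nth p (n - 1) < N + 1 := (Nat.lt_nth_iff_count_lt hinf').mp h1
      omega
  have hset : {k : ℕ | k ∈ luckySet (j + 3) ∧ 1 ≤ k ∧ (k : ℝ) ≤ (N : ℝ)}
      = (fun n => Nat.nth p (n - 1)) '' ↑((Finset.Ioc 0 L).filter (fun n => ¬ ℓ ∣ n)) := by
    ext x
    simp only [Set.mem_setOf_eq, Set.mem_image, Finset.coe_filter, Finset.mem_Ioc,
      Nat.cast_le, mem_luckySet_succ]
    constructor
    · rintro ⟨⟨n, hn1, hnd, rfl⟩, hx1, hxN⟩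
      exact ⟨n, ⟨⟨by omega, (hmemle n hn1).mp hxN⟩, hnd⟩, rfl⟩
    · rintro ⟨n, ⟨⟨hn0, hnL⟩, hnd⟩, rfl⟩
      have hmem : Nat.nth p (n - 1) ∈ luckySet (j + 2) := Nat.nth_mem_of_infinite hinf _
      exact ⟨⟨n, by omega, hnd, rfl⟩, luckySet_ge_one (by omega) hmem,
        (hmemle n (by omega)).mpr hnL⟩
  have hinj : Set.InjOn (fun n => Nat.nth p (n - 1))
      ↑((Finset.Ioc 0 L).filter (fun n => ¬ ℓ ∣ n)) := by
    intro a ha b hb hab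
    simp only [Finset.coe_filter, Set.mem_setOf_eq, Finset.mem_Ioc] at ha hb
    have := Nat.nth_injective hinf' hab
    omega
  rw [show luckyCount (j + 2 + 1) (N : ℝ)
      = {k : ℕ | k ∈ luckySet (j + 3) ∧ 1 ≤ k ∧ (k : ℝ) ≤ (N : ℝ)}.ncard from rfl,
    hset, Set.ncard_image_of_injOn hinj, Set.ncard_coe_finset, hlucky]
  have hdvd : Finset.card ((Finset.Ioc 0 L).filter (fun n => ℓ ∣ n)) = L / ℓ :=
    Nat.Ioc_filter_dvd_card_eq_div L ℓ
  have hsplit := Finset.card_filter_add_card_filter_not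
    (s := Finset.Ioc 0 L) (p := fun n => ℓ ∣ n)
  have hIoc : Finset.card (Finset.Ioc 0 L) = L := by simp
  omega

lemma lucky_cast_ge {i : ℕ} (hi : 1 ≤ i) : (2 : ℝ) ≤ (lucky i : ℝ) := by
  exact_mod_cast lucky_ge_two hi

lemma factor_ge_one {i : ℕ} (hi : 1 ≤ i) : 1 ≤ ((1 : ℝ) - 1 / (lucky i : ℝ))⁻¹ := by
  have h := lucky_cast_ge hi
  rw [one_le_inv_iff₀]
  constructor
  · have : 1 / (lucky i : ℝ) ≤ 1 / 2 := by
      apply one_div_le_one_div_of_le <;> linarith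
    linarith
  · have : 0 < 1 / (lucky i : ℝ) := by positivity
    linarith

lemma factor_ne_zero {i : ℕ} (hi : 1 ≤ i) : ((1 : ℝ) - 1 / (lucky i : ℝ)) ≠ 0 := by
  have h := lucky_cast_ge hi
  have : 1 / (lucky i : ℝ) ≤ 1 / 2 := by
    apply one_div_le_one_div_of_le <;> linarith
  intro hc
  linarith

lemma luckyRho_one_le (m : ℕ) : 1 ≤ luckyRho m := by
  rw [luckyRho]
  have := Finset.prod_le_prod (s := Finset.Icc 1 (m - 1)) (f := fun _ => (1 : ℝ))
    (g := fun i => ((1 : ℝ) - 1 / (lucky i : ℝ))⁻¹)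
    (fun i _ => zero_le_one) (fun i hi => factor_ge_one (Finset.mem_Icc.mp hi).1)
  simpa using this

lemma luckyRho_pos (m : ℕ) : 0 < luckyRho m := lt_of_lt_of_le one_pos (luckyRho_one_le m)

lemma luckyRho_succ {m : ℕ} (hm : 1 ≤ m) :
    luckyRho (m + 1) = luckyRho m * ((1 : ℝ) - 1 / (lucky m : ℝ))⁻¹ := by
  obtain ⟨b, rfl⟩ : ∃ b, m = b + 1 := ⟨m - 1, by omega⟩
  rw [luckyRho, luckyRho]
  rw [show b + 1 + 1 - 1 = b + 1 from rfl, show b + 1 - 1 = b from rfl]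
  exact Finset.prod_Icc_succ_top (by omega) _

lemma luckyCount_cast_succ {i N : ℕ} (hi : 1 ≤ i) (hN : 2 ≤ N) :
    (luckyCount (i + 1) (N : ℝ) : ℝ)
      = (luckyCount i (N : ℝ) : ℝ) * (1 - 1 / (lucky i : ℝ))
        + Int.fract ((luckyCount i (N : ℝ) : ℝ) / (lucky i : ℝ)) := by
  have hnat : luckyCount (i + 1) (N : ℝ)
      = luckyCount i (N : ℝ) - luckyCount i (N : ℝ) / lucky i := by
    rcases eq_or_lt_of_le hi with h | h
    · rw [← h, luckyCount_two hN, luckyCount_one]; rfl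
    · exact luckyCount_step h N
  have hℓ2 : 2 ≤ lucky i := lucky_ge_two hi
  set c := luckyCount i (N : ℝ) with hc
  set ℓ := lucky i with hℓ
  have hdiv : (ℓ : ℝ) * ((c / ℓ : ℕ) : ℝ) + ((c % ℓ : ℕ) : ℝ) = (c : ℝ) := by
    exact_mod_cast Nat.div_add_mod c ℓ
  have hle : c / ℓ ≤ c := Nat.div_le_self _ _
  have hℓ0 : (ℓ : ℝ) ≠ 0 := by positivity
  rw [hnat, Int.fract_div_natCast_eq_div_natCast_mod, Nat.cast_sub hle]
  field_simp
  linarith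

lemma luckyRho_mul_count {N : ℕ} (hN : 2 ≤ N) (j : ℕ) (hj : 1 ≤ j) :
    luckyRho j * (luckyCount j (N : ℝ) : ℝ)
      = (N : ℝ) + ∑ i ∈ Finset.Icc 1 (j - 1),
          luckyRho (i + 1) * Int.fract ((luckyCount i (N : ℝ) : ℝ) / (lucky i : ℝ)) := by
  induction j with
  | zero => omega
  | succ j ih =>
    rcases Nat.lt_or_ge j 1 with h | h
    · interval_cases j
      simp [luckyRho, luckyCount_one]
    · have ihv := ih h
      rw [luckyCount_cast_succ h hN, luckyRho_succ h]
      obtain ⟨b, rfl⟩ : ∃ b, j = b + 1 := ⟨j - 1, by omega⟩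
      rw [show b + 1 + 1 - 1 = b + 1 from rfl]
      rw [Finset.sum_Icc_succ_top (by omega : 1 ≤ b + 1)]
      rw [show b + 1 - 1 = b from rfl] at ihv
      have h1 : ((1 : ℝ) - 1 / (lucky (b + 1) : ℝ)) ≠ 0 := factor_ne_zero (by omega)
      have hexp : luckyRho (b + 1) * ((1 : ℝ) - 1 / (lucky (b + 1) : ℝ))⁻¹
            * ((luckyCount (b + 1) (N : ℝ) : ℝ) * (1 - 1 / (lucky (b + 1) : ℝ))
              + Int.fract ((luckyCount (b + 1) (N : ℝ) : ℝ) / (lucky (b + 1) : ℝ)))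
          = luckyRho (b + 1) * (luckyCount (b + 1) (N : ℝ) : ℝ)
            + luckyRho (b + 1) * ((1 : ℝ) - 1 / (lucky (b + 1) : ℝ))⁻¹
              * Int.fract ((luckyCount (b + 1) (N : ℝ) : ℝ) / (lucky (b + 1) : ℝ)) := by
        field_simp
      rw [hexp, ihv, ← luckyRho_succ (by omega : 1 ≤ b + 1)]
      ring

lemma luckyEll_eq_lucky {m : ℕ} (hm : 2 ≤ m) : luckyEll m m = lucky m := by
  obtain ⟨j, rfl⟩ : ∃ j, m = j + 2 := ⟨m - 2, by omega⟩
  rfl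

lemma count_at_lucky {m : ℕ} (hm : 2 ≤ m) : luckyCount m ((lucky m : ℕ) : ℝ) = m := by
  have hinf := luckySet_infinite hm
  have hinf' : {x | x ∈ luckySet m}.Infinite := hinf
  rw [luckyCount_natCast (by omega)]
  obtain ⟨j, rfl⟩ : ∃ j, m = j + 2 := ⟨m - 2, by omega⟩
  rw [show lucky (j + 2) = Nat.nth (· ∈ luckySet (j + 2)) (j + 1) from rfl]
  exact Nat.count_nth_succ_of_infinite hinf' (j + 1)

lemma tau_key {m : ℕ} (hm : 2 ≤ m) :
    luckyRho m * (m : ℝ) * luckyTau m = luckyRho m * (m : ℝ) - (lucky m : ℝ) := by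
  have hN : 2 ≤ lucky m := lucky_ge_two (by omega)
  have hchain := luckyRho_mul_count hN m (by omega)
  rw [count_at_lucky hm] at hchain
  rw [luckyTau, luckyTau2, luckyEll_eq_lucky hm]
  have hρ : luckyRho m ≠ 0 := ne_of_gt (luckyRho_pos m)
  have hm0 : (m : ℝ) ≠ 0 := Nat.cast_ne_zero.mpr (by omega)
  have hS : luckyRho m * ∑ i ∈ Finset.Icc 1 (m - 1),
        (luckyRho (i + 1) / luckyRho m) *
          Int.fract ((luckyCount i ((lucky m : ℕ) : ℝ) : ℝ) / (lucky i : ℝ))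
      = ∑ i ∈ Finset.Icc 1 (m - 1),
          luckyRho (i + 1) *
            Int.fract ((luckyCount i ((lucky m : ℕ) : ℝ) : ℝ) / (lucky i : ℝ)) := by
    rw [Finset.mul_sum]
    refine Finset.sum_congr rfl fun i _ => ?_
    field_simp
  have hexp : luckyRho m * (m : ℝ) *
        ((1 / (m : ℝ)) * ∑ i ∈ Finset.Icc 1 (m - 1),
          (luckyRho (i + 1) / luckyRho m) *
            Int.fract ((luckyCount i ((lucky m : ℕ) : ℝ) : ℝ) / (lucky i : ℝ)))
      = luckyRho m * ∑ i ∈ Finset.Icc 1 (m - 1),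
          (luckyRho (i + 1) / luckyRho m) *
            Int.fract ((luckyCount i ((lucky m : ℕ) : ℝ) : ℝ) / (lucky i : ℝ)) := by
    field_simp
  rw [hexp, hS]
  linarith [hchain]

lemma luckyTau_nonneg (m : ℕ) : 0 ≤ luckyTau m := by
  rw [luckyTau, luckyTau2]
  apply mul_nonneg (by positivity)
  apply Finset.sum_nonneg
  intro i hi
  exact mul_nonneg (div_nonneg (luckyRho_pos _).le (luckyRho_pos _).le) (Int.fract_nonneg _)

lemma varrho_step {m : ℕ} (hm : 2 ≤ m) :
    luckyVarrho m + luckyTau m / (m : ℝ) ≤ luckyVarrho (m + 1) := by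
  have hρ1 := luckyRho_one_le m
  have hρpos := luckyRho_pos m
  have hℓ : (2 : ℝ) ≤ (lucky m : ℝ) := lucky_cast_ge (by omega)
  have hm2 : (2 : ℝ) ≤ (m : ℝ) := by exact_mod_cast hm
  have hkey := tau_key hm
  have hτ0 : 0 ≤ luckyTau m := luckyTau_nonneg m
  set ℓ := (lucky m : ℝ) with hℓdef
  set ρ := luckyRho m with hρdef
  set τ := luckyTau m with hτdef
  have ha2 : (2 : ℝ) ≤ ρ * m := by nlinarith
  have ha : ℓ ≤ ρ * m := by nlinarith
  have hℓ0 : ℓ ≠ 0 := by intro hc; rw [hc] at hℓ; norm_num at hℓ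
  have hℓ1 : ℓ - 1 ≠ 0 := by intro hc; nlinarith
  have hf0 : (1 : ℝ) - 1 / ℓ ≠ 0 := factor_ne_zero (by omega)
  have hm0 : (m : ℝ) ≠ 0 := by positivity
  have hρs : luckyRho (m + 1) = ρ * (1 - 1 / ℓ)⁻¹ := luckyRho_succ (by omega)
  have hid : ρ * (1 - 1 / ℓ)⁻¹ - ρ = ρ / (ℓ - 1) := by
    field_simp
    ring
  have hsum : ∑ k ∈ Finset.Icc 1 ((m + 1) - 1), (1 : ℝ) / (k : ℝ)
      = (∑ k ∈ Finset.Icc 1 (m - 1), (1 : ℝ) / (k : ℝ)) + 1 / (m : ℝ) := by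
    obtain ⟨b, rfl⟩ : ∃ b, m = b + 1 := ⟨m - 1, by omega⟩
    rw [show b + 1 + 1 - 1 = b + 1 from rfl, show b + 1 - 1 = b from rfl]
    exact Finset.sum_Icc_succ_top (by omega) _
  have h1 : ρ * (m : ℝ) * ((τ + 1) * (ℓ - 1)) = (2 * (ρ * m) - ℓ) * (ℓ - 1) := by
    linear_combination (ℓ - 1) * hkey
  have h2 : (2 * (ρ * m) - ℓ) * (ℓ - 1) ≤ (ρ * m) * (ρ * m) := by
    nlinarith [sq_nonneg (ρ * m - ℓ)]
  have h3 : (τ + 1) * (ℓ - 1) ≤ ρ * m := by nlinarith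
  have h4 : τ / m + 1 / m ≤ ρ / (ℓ - 1) := by
    rw [← add_div, div_le_div_iff₀ (by linarith) (by nlinarith)]
    nlinarith
  rw [luckyVarrho, luckyVarrho, hρs, hsum, ← hρdef]
  linarith [hid, h4]

lemma varrho_mono_step {m : ℕ} (hm : 2 ≤ m) : luckyVarrho m ≤ luckyVarrho (m + 1) := by
  have h1 := varrho_step hm
  have h2 : 0 ≤ luckyTau m / (m : ℝ) :=
    div_nonneg (luckyTau_nonneg m) (by positivity)
  linarith

lemma varrho_main {n₀ : ℕ} (h₀ : 2 ≤ n₀) : ∀ n, n₀ ≤ n →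
    luckyVarrho n₀ + (∑ k ∈ Finset.Icc n₀ (n - 1), luckyTau k / (k : ℝ)) ≤ luckyVarrho n := by
  intro n
  induction n with
  | zero => omega
  | succ n ih =>
    intro hn
    rcases eq_or_lt_of_le hn with h | h
    · rw [← h, Finset.Icc_eq_empty (by omega)]
      simp
    · have hn' : n₀ ≤ n := by omega
      have ihv := ih hn'
      have hstep := varrho_step (show 2 ≤ n by omega)
      rw [show n + 1 - 1 = n from rfl]
      obtain ⟨b, rfl⟩ : ∃ b, n = b + 1 := ⟨n - 1, by omega⟩
      rw [Finset.sum_Icc_succ_top (show n₀ ≤ b + 1 by omega)]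
      rw [show b + 1 - 1 = b from rfl] at ihv
      push_cast at hstep ⊢
      linarith


end

theorem varrho_lower_and_mono (n n₀ : ℕ) (h₀ : 2 ≤ n₀) (h : n₀ ≤ n) :
    luckyVarrho n₀ + (∑ k ∈ Finset.Icc n₀ (n - 1), luckyTau k / (k : ℝ))
        ≤ luckyVarrho n ∧
    ∀ m m' : ℕ, 2 ≤ m → m ≤ m' → luckyVarrho m ≤ luckyVarrho m' := by
  refine ⟨varrho_main h₀ n h, ?_⟩
  intro m m' hm hle
  induction m', hle using Nat.le_induction with
  | base => exact le_rfl
  | succ k hk ih => exact ih.trans (varrho_mono_step (by omega))
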